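/- arXiv:2511.06432 — 2 statements merged into one kernel-verified Lean document; each statement's English description precedes it below -/
import Mathlib

section
/- (Miyadera–Gustafson theorem) Let (D(A), A) be a densely defined maximally dissipative operator on a Banach space 𝓑, and let (D(B), B) be a dissipative operator with D(A) ⊆ D(B) which is A-bounded with relative bound smaller than 1, i.e. there exist 0 ≤ a < 1 and b ≥ 0 such that ‖Bφ‖ ≤ a‖Aφ‖ + b‖φ‖ for all φ ∈ D(A). Then (D(A), A + B) is a maximally dissipative operator. -/
/-! For `x ∈ D(A)`, a functional `f` of norm `≤ 1` norming `μx - Bx` with `μ` large has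
`f (Bx) ≤ 0` and `f x ≈ ‖x‖`. On the Yosida approximant `νAR(ν, A)x = ν(νR(ν, A) - 1)x` it
satisfies `f (νAR(ν, A)x) ≤ ν(‖x‖ - f x)`, because `νR(ν, A)` is a contraction; density of
`D(A)` makes these approximants converge to `Ax`. Hence `f (λx - (A + B)x) ≳ λ‖x‖`, i.e. `A + B`
is dissipative.

Surjectivity of `λ - (A + tB)` is pushed from `t = 0` to `t = 1` in steps of a fixed size `s`:
for `t ∈ [0, 1]` the operator `B` is `(A + tB)`-bounded with constants `a/(1-a)`, `b/(1-a)`, and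
`‖(A + tB)R‖ ≤ 2` for `R = R(λ, A + tB)`, so `‖sBR‖ < 1` and a Neumann series inverts
`1 - sBR = (λ - (A + (t + s)B))R`. -/

noncomputable section

variable {E : Type*} [NormedAddCommGroup E] [NormedSpace ℝ E]

/-- An operator `T` with domain `D` is dissipative: `‖(λ - T)g‖ ≥ λ‖g‖` for `g ∈ D`, `λ > 0`. -/
def Dissipative (D : Submodule ℝ E) (T : D →ₗ[ℝ] E) : Prop :=
  ∀ g : D, ∀ lam : ℝ, 0 < lam → lam * ‖(g : E)‖ ≤ ‖lam • (g : E) - T g‖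

/-- Maximally dissipative: dissipative and `λ - T : D → E` is surjective for every `λ > 0`. -/
def MaximallyDissipative (D : Submodule ℝ E) (T : D →ₗ[ℝ] E) : Prop :=
  Dissipative D T ∧ ∀ h : E, ∀ lam : ℝ, 0 < lam → ∃ g : D, lam • (g : E) - T g = h


open Function

variable {D : Submodule ℝ E} {T : D →ₗ[ℝ] E} {lam : ℝ}

theorem MaximallyDissipative.surjective (hT : MaximallyDissipative D T) (hlam : 0 < lam) :
    Surjective (lam • D.subtype - T) :=
  fun h ↦ hT.2 h lam hlam

namespace Dissipative

theorem smul (hT : Dissipative D T) {s : ℝ} (hs : 0 ≤ s) : Dissipative D (s • T) := by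
  intro g lam hlam
  rcases hs.eq_or_lt with rfl | hs
  · simp [norm_smul, abs_of_pos hlam]
  calc lam * ‖(g : E)‖ = s * (lam / s * ‖(g : E)‖) := by field_simp
    _ ≤ s * ‖(lam / s) • (g : E) - T g‖ :=
      mul_le_mul_of_nonneg_left (hT g (lam / s) (div_pos hlam hs)) hs.le
    _ = ‖lam • (g : E) - (s • T) g‖ := by
      have hsplit : lam • (g : E) - s • T g = s • ((lam / s) • (g : E) - T g) := by
        rw [smul_sub, smul_smul, mul_div_cancel₀ lam hs.ne']
      rw [LinearMap.smul_apply, hsplit, norm_smul, Real.norm_of_nonneg hs.le]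

theorem injective (hT : Dissipative D T) (hlam : 0 < lam) : Injective (lam • D.subtype - T) := by
  refine (injective_iff_map_eq_zero _).2 fun g hg ↦ ?_
  have key := hT g lam hlam
  rw [show lam • (g : E) - T g = 0 from hg, norm_zero] at key
  exact_mod_cast norm_le_zero_iff.1 (nonpos_of_mul_nonpos_right key hlam)

def resolvent (hT : Dissipative D T) (hlam : 0 < lam) (hsurj : Surjective (lam • D.subtype - T)) :
    E →ₗ[ℝ] D :=
  (LinearEquiv.ofBijective _ ⟨hT.injective hlam, hsurj⟩).symm.toLinearMap

variable (hT : Dissipative D T) (hlam : 0 < lam) (hsurj : Surjective (lam • D.subtype - T))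

theorem sub_apply_resolvent (h : E) :
    lam • (hT.resolvent hlam hsurj h : E) - T (hT.resolvent hlam hsurj h) = h :=
  (LinearEquiv.ofBijective _ ⟨hT.injective hlam, hsurj⟩).apply_symm_apply h

theorem resolvent_sub_apply (g : D) : hT.resolvent hlam hsurj (lam • (g : E) - T g) = g :=
  LinearEquiv.ofBijective_symm_apply_apply _ g

theorem norm_resolvent_le (h : E) : lam * ‖(hT.resolvent hlam hsurj h : E)‖ ≤ ‖h‖ := by
  simpa only [sub_apply_resolvent] using hT (hT.resolvent hlam hsurj h) lam hlam

end Dissipative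

theorem StrongDual.apply_le_norm {f : StrongDual ℝ E} (hf : ‖f‖ ≤ 1) (v : E) : f v ≤ ‖v‖ :=
  (le_abs_self _).trans (by simpa using f.le_of_opNorm_le hf v)

theorem Dissipative.exists_dual_near {B : D →ₗ[ℝ] E} (hB : Dissipative D B) (x : D) {δ : ℝ}
    (hδ : 0 < δ) : ∃ f : StrongDual ℝ E, ‖f‖ ≤ 1 ∧ f (B x) ≤ 0 ∧ ‖(x : E)‖ - δ ≤ f x := by
  set μ := ‖B x‖ / δ + 1
  have hμ : 0 < μ := by positivity
  obtain ⟨f, hf, hfy⟩ := exists_dual_vector'' ℝ (μ • (x : E) - B x)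
  rw [RCLike.ofReal_real_eq_id, id] at hfy
  have hnorm : μ * ‖(x : E)‖ ≤ μ * f x - f (B x) := by
    have := hB x μ hμ
    rwa [← hfy, map_sub, map_smul, smul_eq_mul] at this
  have hfx := StrongDual.apply_le_norm hf x
  have hfB : -f (B x) ≤ ‖B x‖ := by simpa using StrongDual.apply_le_norm hf (-B x)
  refine ⟨f, hf, by nlinarith, ?_⟩
  have hBx : ‖B x‖ ≤ δ * μ := by
    simp only [μ, mul_add, mul_div_cancel₀ _ hδ.ne']
    linarith
  have hgap : μ * (‖(x : E)‖ - f x) ≤ μ * δ := by linarith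
  linarith [le_of_mul_le_mul_left hgap hμ]

namespace MaximallyDissipative

abbrev resolvent (hT : MaximallyDissipative D T) (hlam : 0 < lam) : E →ₗ[ℝ] D :=
  hT.1.resolvent hlam (hT.surjective hlam)

theorem exists_smul_resolvent_near (hT : MaximallyDissipative D T) (hdense : Dense (D : Set E))
    (z : E) {ε : ℝ} (hε : 0 < ε) :
    ∃ ν, ∃ hν : 0 < ν, ‖ν • (hT.resolvent hν z : E) - z‖ < ε := by
  obtain ⟨w, hwD, hzw⟩ := hdense.exists_dist_lt z (by positivity : 0 < ε / 3)
  rw [dist_eq_norm] at hzw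
  set ν := 3 * (‖T ⟨w, hwD⟩‖ + 1) / ε
  have hν : 0 < ν := by positivity
  refine ⟨ν, hν, ?_⟩
  set R := hT.resolvent hν
  have hRw : ν • (R w : E) - w = R (T ⟨w, hwD⟩) := by
    have := congrArg Subtype.val (hT.1.resolvent_sub_apply hν (hT.surjective hν) ⟨w, hwD⟩)
    rw [map_sub, map_smul, Submodule.coe_sub, Submodule.coe_smul] at this
    linear_combination (norm := module) this
  have hsplit : ν • (R z : E) - z = (ν • (R (z - w) : E) - (z - w)) + R (T ⟨w, hwD⟩) := by
    rw [← hRw, map_sub, Submodule.coe_sub]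
    module
  have h1 : ‖ν • (R (z - w) : E)‖ ≤ ‖z - w‖ := by
    rw [norm_smul, Real.norm_of_nonneg hν.le]
    exact hT.1.norm_resolvent_le hν (hT.surjective hν) (z - w)
  have h2 := hT.1.norm_resolvent_le hν (hT.surjective hν) (T ⟨w, hwD⟩)
  have hνε : ν * (ε / 3) = ‖T ⟨w, hwD⟩‖ + 1 := by
    simp only [ν]
    field_simp
  have h3 : ‖(R (T ⟨w, hwD⟩) : E)‖ < ε / 3 := lt_of_mul_lt_mul_left (by linarith) hν.le
  calc ‖ν • (R z : E) - z‖
      ≤ ‖ν • (R (z - w) : E)‖ + ‖z - w‖ + ‖(R (T ⟨w, hwD⟩) : E)‖ := by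
        rw [hsplit]
        exact (norm_add_le _ _).trans (add_le_add_left (norm_sub_le _ _) _)
    _ < ε := by linarith

theorem dual_apply_le (hT : MaximallyDissipative D T) {f : StrongDual ℝ E} (hf : ‖f‖ ≤ 1)
    (x : D) {ν : ℝ} (hν : 0 < ν) :
    f (T x) ≤ ν * (‖(x : E)‖ - f x) + ‖ν • (hT.resolvent hν (T x) : E) - T x‖ := by
  set u := hT.resolvent hν (ν • (x : E))
  have hu : ‖(u : E)‖ ≤ ‖(x : E)‖ := by
    have := hT.1.norm_resolvent_le hν (hT.surjective hν) (ν • (x : E))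
    rw [norm_smul, Real.norm_of_nonneg hν.le] at this
    exact le_of_mul_le_mul_left this hν
  have hTx : hT.resolvent hν (T x) = u - x := by
    rw [show T x = ν • (x : E) - (ν • (x : E) - T x) by abel, map_sub,
      hT.1.resolvent_sub_apply hν (hT.surjective hν) x]
  have key : f (T x) = ν * (f u - f x) + f (T x - ν • (hT.resolvent hν (T x) : E)) := by
    rw [map_sub (f := f), map_smul, hTx, Submodule.coe_sub, map_sub, smul_eq_mul]
    ring
  have hfu := StrongDual.apply_le_norm hf u
  have hrest := StrongDual.apply_le_norm hf (T x - ν • (hT.resolvent hν (T x) : E))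
  rw [norm_sub_rev] at hrest
  have hνfu := mul_le_mul_of_nonneg_left (hfu.trans hu) hν.le
  linarith

theorem dissipative_add (hT : MaximallyDissipative D T) (hdense : Dense (D : Set E))
    {B : D →ₗ[ℝ] E} (hB : Dissipative D B) :
    Dissipative D (T + B) := by
  intro x lam hlam
  refine le_of_forall_pos_le_add fun ε hε ↦ ?_
  obtain ⟨ν, hν, hnear⟩ := hT.exists_smul_resolvent_near hdense (T x) (half_pos hε)
  obtain ⟨f, hf, hfB, hfx⟩ := hB.exists_dual_near x (δ := ε / 2 / (lam + ν)) (by positivity)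
  have hfT := hT.dual_apply_le hf x hν
  have hf_apply := StrongDual.apply_le_norm hf (lam • (x : E) - (T + B) x)
  rw [LinearMap.add_apply] at hf_apply ⊢
  rw [map_sub, map_add, map_smul, smul_eq_mul] at hf_apply
  have hδ : (lam + ν) * (‖(x : E)‖ - f x) ≤ ε / 2 := by
    rw [← le_div_iff₀' (by positivity)]
    linarith
  linarith

end MaximallyDissipative

def IsRelBounded (T C : D →ₗ[ℝ] E) (a b : ℝ) : Prop :=
  ∀ φ : D, ‖C φ‖ ≤ a * ‖T φ‖ + b * ‖(φ : E)‖

theorem IsRelBounded.add_smul {C : D →ₗ[ℝ] E} {a b t : ℝ} (hC : IsRelBounded T C a b)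
    (ha0 : 0 ≤ a) (ha1 : a < 1) (ht0 : 0 ≤ t) (ht1 : t ≤ 1) :
    IsRelBounded (T + t • C) C (a / (1 - a)) (b / (1 - a)) := by
  intro φ
  have hTφ : ‖T φ‖ ≤ ‖(T + t • C) φ‖ + t * ‖C φ‖ := by
    have := norm_sub_le ((T + t • C) φ) (t • C φ)
    rwa [LinearMap.add_apply, LinearMap.smul_apply, add_sub_cancel_right, norm_smul,
      Real.norm_of_nonneg ht0] at this
  rw [div_mul_eq_mul_div, div_mul_eq_mul_div, ← add_div, le_div_iff₀ (by linarith)]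
  nlinarith [hC φ, mul_le_mul_of_nonneg_left hTφ ha0,
    mul_nonneg (mul_nonneg ha0 (norm_nonneg (C φ))) (sub_nonneg.2 ht1)]

namespace Dissipative

theorem norm_apply_resolvent_le (hT : Dissipative D T) (hlam : 0 < lam)
    (hsurj : Surjective (lam • D.subtype - T)) {C : D →ₗ[ℝ] E} {a b : ℝ} (ha : 0 ≤ a) (hb : 0 ≤ b)
    (hC : IsRelBounded T C a b) (w : E) :
    ‖C (hT.resolvent hlam hsurj w)‖ ≤ (2 * a + b / lam) * ‖w‖ := by
  set g := hT.resolvent hlam hsurj w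
  have hg : lam * ‖(g : E)‖ ≤ ‖w‖ := hT.norm_resolvent_le hlam hsurj w
  have hTg : ‖T g‖ ≤ 2 * ‖w‖ := by
    have := norm_sub_le (lam • (g : E)) (lam • (g : E) - T g)
    rw [sub_sub_cancel, hT.sub_apply_resolvent, norm_smul, Real.norm_of_nonneg hlam.le] at this
    linarith
  have hbg : b * ‖(g : E)‖ ≤ b / lam * ‖w‖ := by
    rw [div_mul_eq_mul_div, le_div_iff₀ hlam]
    nlinarith
  nlinarith [hC g]

theorem surjective_add_smul [CompleteSpace E] (hT : Dissipative D T) (hlam : 0 < lam)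
    (hsurj : Surjective (lam • D.subtype - T)) {C : D →ₗ[ℝ] E} {a b s : ℝ} (ha : 0 ≤ a)
    (hb : 0 ≤ b) (hs : 0 ≤ s) (hC : IsRelBounded T C a b) (hsmall : s * (2 * a + b / lam) < 1) :
    Surjective (lam • D.subtype - (T + s • C)) := by
  set R := hT.resolvent hlam hsurj
  have hbound (w : E) : ‖(s • C ∘ₗ R) w‖ ≤ s * (2 * a + b / lam) * ‖w‖ := by
    rw [LinearMap.smul_apply, norm_smul, Real.norm_of_nonneg hs, mul_assoc]
    exact mul_le_mul_of_nonneg_left (hT.norm_apply_resolvent_le hlam hsurj ha hb hC w) hs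
  set K : E →L[ℝ] E := (s • C ∘ₗ R).mkContinuous _ hbound
  have hK : ‖K‖ < 1 := (LinearMap.mkContinuous_norm_le _ (by positivity) _).trans_lt hsmall
  obtain ⟨U, hU⟩ := isUnit_one_sub_of_norm_lt_one hK
  have hfactor (v : E) : (lam • D.subtype - (T + s • C)) (R v) = (1 - K) v := by
    have hRv : lam • (R v : E) - T (R v) = v := hT.sub_apply_resolvent hlam hsurj v
    simp only [LinearMap.sub_apply, LinearMap.add_apply, LinearMap.smul_apply,
      Submodule.subtype_apply, sub_apply, one_apply_eq_self, K, LinearMap.mkContinuous_apply,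
      LinearMap.comp_apply]
    rw [sub_add_eq_sub_sub, hRv]
  intro h
  refine ⟨R ((↑U⁻¹ : E →L[ℝ] E) h), ?_⟩
  rw [hfactor, ← hU]
  exact congr($(U.mul_inv) h)

end Dissipative

theorem induction_zero_one_of_uniform_step {P : ℝ → Prop} {δ : ℝ} (hδ : 0 < δ) (h0 : P 0)
    (hstep : ∀ t s, 0 ≤ t → 0 ≤ s → s ≤ δ → t + s ≤ 1 → P t → P (t + s)) : P 1 := by
  have key (n : ℕ) : P (min 1 (n * δ)) := by
    induction n with
    | zero => simpa using h0
    | succ n ih =>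
      have hle : min 1 (n * δ) ≤ min 1 ((n + 1 : ℕ) * δ) :=
        min_le_min_left 1 (by gcongr; exact_mod_cast n.le_succ)
      have hstep_le : min 1 ((n + 1 : ℕ) * δ) ≤ min 1 (n * δ) + δ := by
        rw [← min_add_add_right, Nat.cast_succ, add_one_mul]
        exact min_le_min (by linarith) le_rfl
      simpa using hstep _ _ (le_min zero_le_one (by positivity)) (sub_nonneg.2 hle)
        (by linarith) (by linarith [min_le_left 1 ((n + 1 : ℕ) * δ)]) ih
  obtain ⟨n, hn⟩ := exists_nat_ge (1 / δ)
  simpa [min_eq_left ((div_le_iff₀ hδ).1 hn)] using key n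

/-- **Miyadera–Gustafson theorem.** If `A` is a densely defined maximally dissipative
operator on a Banach space, and `B` is dissipative and `A`-bounded with relative bound
smaller than `1`, then `A + B` (with domain `D(A)`) is maximally dissipative. -/
theorem miyadera_gustafson {E : Type*} [NormedAddCommGroup E] [NormedSpace ℝ E]
    [CompleteSpace E]
    (DA DB : Submodule ℝ E) (hdense : Dense (DA : Set E)) (hsub : DA ≤ DB)
    (A : DA →ₗ[ℝ] E) (B : DB →ₗ[ℝ] E)
    (hA : MaximallyDissipative DA A) (hB : Dissipative DB B)
    (a b : ℝ) (ha0 : 0 ≤ a) (ha1 : a < 1) (hb0 : 0 ≤ b)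
    (hbound : ∀ φ : DA, ‖B (Submodule.inclusion hsub φ)‖ ≤ a * ‖A φ‖ + b * ‖(φ : E)‖) :
    MaximallyDissipative DA (A + B.comp (Submodule.inclusion hsub)) := by
  set B' := B.comp (Submodule.inclusion hsub)
  have hB' : Dissipative DA B' := fun g ↦ hB (Submodule.inclusion hsub g)
  have hdiss (t : ℝ) (ht : 0 ≤ t) : Dissipative DA (A + t • B') :=
    hA.dissipative_add hdense (hB'.smul ht)
  refine ⟨by simpa using hdiss 1 zero_le_one, fun h lam hlam ↦ ?_⟩
  have ha' : 0 ≤ a / (1 - a) := div_nonneg ha0 (by linarith)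
  have hb' : 0 ≤ b / (1 - a) := div_nonneg hb0 (by linarith)
  set κ := 2 * (a / (1 - a)) + b / (1 - a) / lam
  have hκ : 0 ≤ κ := by positivity
  have hsurj : Surjective (lam • DA.subtype - (A + (1 : ℝ) • B')) := by
    refine induction_zero_one_of_uniform_step
      (P := fun t ↦ Surjective (lam • DA.subtype - (A + t • B'))) (δ := 1 / (κ + 1))
      (by positivity)
      (by simpa using hA.surjective hlam) fun t s ht hs hsδ hts hsurj_t ↦ ?_
    rw [add_smul, ← add_assoc]
    refine (hdiss t ht).surjective_add_smul hlam hsurj_t ha' hb' hs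
      ((show IsRelBounded A B' a b from hbound).add_smul ha0 ha1 ht (by linarith)) ?_
    calc s * κ ≤ 1 / (κ + 1) * κ := mul_le_mul_of_nonneg_right hsδ hκ
      _ < 1 := by rw [one_div_mul_eq_div, div_lt_one (by positivity)]; linarith
  simpa using hsurj h

end
end

section
/- Let u ∈ L²₊(ℝ) and λ > 0. The operator K_λ : L^∞(ℝ) → L^∞(ℝ) defined by K_λ(a)(x) = −i ∫_{−∞}^x e^{−iλy} u(y) Π(ū e^{iλ·} a)(y) dy is a compact operator on L^∞(ℝ). -/
open MeasureTheory Complex Filter Topology Set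
open scoped ENNReal

noncomputable section

/-- Fourier transform with the convention `FT f ξ = ∫ e^{-iξx} f x dx`. -/
def FT (f : ℝ → ℂ) (ξ : ℝ) : ℂ :=
  ∫ x : ℝ, Complex.exp (-(Complex.I) * ξ * x) * f x

/-- The tempered-distributional Fourier transform of `f` is (represented by) the function `F`. -/
def IsDistribFT (f F : ℝ → ℂ) : Prop :=
  ∀ φ : SchwartzMap ℝ ℂ, ∫ ξ : ℝ, F ξ * φ ξ = ∫ x : ℝ, f x * FT (fun η => φ η) x

/-- `f ∈ L^p_+(ℝ)` : `f ∈ L^p` and the distributional Fourier transform of `f` is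
supported in `[0,∞)` (it vanishes against every Schwartz function vanishing on `[0,∞)`). -/
def HardyLp (p : ℝ≥0∞) (f : ℝ → ℂ) : Prop :=
  MemLp f p (volume : Measure ℝ) ∧
    ∀ φ : SchwartzMap ℝ ℂ, (∀ ξ : ℝ, 0 ≤ ξ → φ ξ = 0) →
      ∫ x : ℝ, f x * FT (fun η => φ η) x = 0

/-- The weight condition `|x|^α f ∈ L²(ℝ)`. -/
def WeightedL2 (α : ℝ) (f : ℝ → ℂ) : Prop :=
  MemLp (fun x : ℝ => ((|x| ^ α : ℝ) : ℂ) * f x) 2 (volume : Measure ℝ)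

/-- `Pi` is (an everywhere-defined representative of) the Szegő projector:
for `g ∈ L²`, `Pi g` belongs to the Hardy space `L²₊` and `g - Pi g ⟂ L²₊`. -/
def IsSzego (Pi : (ℝ → ℂ) → ℝ → ℂ) : Prop :=
  ∀ g : ℝ → ℂ, MemLp g 2 (volume : Measure ℝ) →
    HardyLp 2 (Pi g) ∧
      ∀ h : ℝ → ℂ, HardyLp 2 h →
        ∫ x : ℝ, (g x - Pi g x) * (starRingEnd ℂ) (h x) = 0

/-- Szegő projector of a nice (e.g. Schwartz) function, by the explicit formula
`Π g (x) = (2π)⁻¹ ∫_0^∞ e^{ixξ} ĝ(ξ) dξ`. -/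
def SzegoSmooth (g : ℝ → ℂ) (x : ℝ) : ℂ :=
  (1 / (2 * (Real.pi : ℂ))) * ∫ ξ in Ioi (0 : ℝ), Complex.exp (Complex.I * x * ξ) * FT g ξ

/-- `(L_u - λ) m = r` in the distributional sense, where `L_u = D + u T_{ū}`,
`D = -i d/dx`. -/
def LaxEqWith (Pi : (ℝ → ℂ) → ℝ → ℂ) (u : ℝ → ℂ) (lam : ℝ) (m r : ℝ → ℂ) : Prop :=
  ∀ φ : SchwartzMap ℝ ℂ,
    Complex.I * (∫ x : ℝ, m x * deriv (fun y => φ y) x)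
        + (∫ x : ℝ, u x * Pi (fun y => (starRingEnd ℂ) (u y) * m y) x * φ x)
      = (lam : ℂ) * (∫ x : ℝ, m x * φ x) + ∫ x : ℝ, r x * φ x

/-- `(L_u - λ) m = 0` in the distributional sense. -/
def LaxEq (Pi : (ℝ → ℂ) → ℝ → ℂ) (u : ℝ → ℂ) (lam : ℝ) (m : ℝ → ℂ) : Prop :=
  LaxEqWith Pi u lam m (fun _ => 0)

/-- `m` is a generalized eigenfunction of `L_u` at energy `λ`, bounded, with Fourier
support in `[0,∞)`, normalised by `e^{-iλx} m(x) → ℓ` as `x → -∞`. -/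
def IsJostWith (Pi : (ℝ → ℂ) → ℝ → ℂ) (u : ℝ → ℂ) (lam : ℝ) (ℓ : ℂ) (m : ℝ → ℂ) : Prop :=
  HardyLp ⊤ m ∧ LaxEq Pi u lam m ∧
    Tendsto (fun x : ℝ => Complex.exp (-(Complex.I) * lam * x) * m x) atBot (𝓝 ℓ)

/-- The canonical Jost function `m₋(·,λ)`, normalised by `ℓ = 1`. -/
def IsJost (Pi : (ℝ → ℂ) → ℝ → ℂ) (u : ℝ → ℂ) (lam : ℝ) (m : ℝ → ℂ) : Prop :=
  IsJostWith Pi u lam 1 m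

/-- Distorted Fourier transform, direct integral formula (valid for `f ∈ L¹₊`). -/
def dFT (mMinus : ℝ → ℝ → ℂ) (f : ℝ → ℂ) (lam : ℝ) : ℂ :=
  ∫ x : ℝ, f x * (starRingEnd ℂ) (mMinus x lam)

/-- `tf` is the distorted Fourier transform of the `L²` function `f`, characterised by
duality against the dense class `L¹₊ ∩ L²₊` (where the direct formula makes sense). -/
def IsdFTL2 (mMinus : ℝ → ℝ → ℂ) (f tf : ℝ → ℂ) : Prop :=
  MemLp tf 2 ((volume : Measure ℝ).restrict (Ioi 0)) ∧
    ∀ g : ℝ → ℂ, HardyLp 1 g → MemLp g 2 (volume : Measure ℝ) →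
      ∫ x : ℝ, f x * (starRingEnd ℂ) (g x)
        = (1 / (2 * (Real.pi : ℂ)))
            * ∫ lam in Ioi (0 : ℝ), tf lam * (starRingEnd ℂ) (dFT mMinus g lam)

/-- The operator `K_λ(a)(x) = -i ∫_{-∞}^x e^{-iλy} u(y) Π(ū e^{iλ·} a)(y) dy`. -/
def Kop (Pi : (ℝ → ℂ) → ℝ → ℂ) (u : ℝ → ℂ) (lam : ℝ) (a : ℝ → ℂ) (x : ℝ) : ℂ :=
  -(Complex.I) * ∫ y in Iic x,
      Complex.exp (-(Complex.I) * lam * y) * u y *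
        Pi (fun z => (starRingEnd ℂ) (u z) * Complex.exp (Complex.I * lam * z) * a z) y

/-- The holomorphic extension of a Hardy function to the upper half plane,
via the Cauchy integral `(2iπ)⁻¹ ∫ f(y)/(y-z) dy`. -/
def hardyExt (f : ℝ → ℂ) (z : ℂ) : ℂ :=
  (1 / (2 * (Real.pi : ℂ) * Complex.I)) * ∫ y : ℝ, f y / ((y : ℂ) - z)

/-- Weak (distributional) solution of the defocusing (CM-DNLS)
`i∂ₜu + ∂ₓ²u - 2 Π D(|u|²) u = 0`; `N t` represents `Π D(|u(t)|²)`. -/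
def IsWeakCMSol (u : ℝ → ℝ → ℂ) : Prop :=
  ∃ N : ℝ → ℝ → ℂ,
    (∀ t : ℝ, ∀ ψ : SchwartzMap ℝ ℂ,
        ∫ x : ℝ, N t x * ψ x =
          Complex.I * ∫ y : ℝ, ((‖u t y‖ : ℂ) ^ 2) *
            deriv (fun w : ℝ =>
              (starRingEnd ℂ) (SzegoSmooth (fun s => (starRingEnd ℂ) (ψ s)) w)) y) ∧
    (∀ t : ℝ, Integrable (fun x : ℝ => N t x * u t x) (volume : Measure ℝ)) ∧
    (∀ φ : SchwartzMap (ℝ × ℝ) ℂ,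
        ∫ t : ℝ, ∫ x : ℝ,
            u t x * (-(Complex.I) * deriv (fun s => φ (s, x)) t
                + deriv (deriv fun y => φ (t, y)) x)
          = 2 * ∫ t : ℝ, ∫ x : ℝ, N t x * u t x * φ (t, x))

/-- `u` is a global solution of the defocusing (CM-DNLS) in `C(ℝ, L²₊(ℝ))`
with initial datum `u₀`. -/
def IsCMFlow (u₀ : ℝ → ℂ) (u : ℝ → ℝ → ℂ) : Prop :=
  u 0 = u₀ ∧ (∀ t : ℝ, HardyLp 2 (u t)) ∧
    (∀ t₀ : ℝ,
      Tendsto (fun t => eLpNorm (fun x => u t x - u t₀ x) 2 (volume : Measure ℝ))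
        (𝓝 t₀) (𝓝 0)) ∧
    IsWeakCMSol u

/-- `S t = e^{it∂ₓ²} v` where `v̂ = tu` on `(0,∞)` and `0` on `(-∞,0)` :
the Fourier transform of `S t` is `1_{(0,∞)}(ξ) e^{-itξ²} tu ξ`. -/
def IsFreeEvolution (tu : ℝ → ℂ) (S : ℝ → ℝ → ℂ) : Prop :=
  ∀ t : ℝ, MemLp (S t) 2 (volume : Measure ℝ) ∧
    IsDistribFT (S t)
      ((Ioi (0:ℝ)).indicator fun ξ => Complex.exp (-(Complex.I) * t * ξ ^ 2) * tu ξ)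

/-- Principal-value Hilbert transform on the half line `(0,∞)` :
`Hg(λ) = π⁻¹ p.v. ∫_0^∞ g(μ)/(λ-μ) dμ`. -/
def IsPVHilbert (g Hg : ℝ → ℂ) : Prop :=
  ∀ lam : ℝ, 0 < lam →
    Tendsto (fun ε : ℝ => (Real.pi : ℂ)⁻¹ *
        ∫ μ in Ioi (0:ℝ) \ Ioo (lam - ε) (lam + ε), g μ / ((lam : ℂ) - μ))
      (𝓝[>] (0:ℝ)) (𝓝 (Hg lam))

/-- The explicit resolvent `(i∂_λ + 2tλ - z)⁻¹`. -/
def freeResolvent (t : ℝ) (z : ℂ) (w : ℝ → ℂ) (lam : ℝ) : ℂ :=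
  Complex.I * Complex.exp (Complex.I * t * lam ^ 2 - Complex.I * z * lam) *
    ∫ η in Ioi lam, Complex.exp (-(Complex.I) * t * η ^ 2 + Complex.I * z * η) * w η

/-- The operator `B(ũ) f = -(1/4π) (i ũ H(ū̃ f) - |ũ|² f)`, where `Hf` is a given
realisation of the half-line Hilbert transform of `conj ũ · f`. -/
def Bop (tu : ℝ → ℂ) (f Hf : ℝ → ℂ) (lam : ℝ) : ℂ :=
  -(1 / (4 * (Real.pi : ℂ))) *
    (Complex.I * tu lam * Hf lam - ((‖tu lam‖ : ℂ)) ^ 2 * f lam)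

end

/-!
For `‖a‖_∞ ≤ 1` put `g_a = e^{-iλ·} Π(ū e^{iλ·} a)`, so that `K_λ a (x) = -i ∫_{-∞}^x u g_a` and
`‖g_a‖₂ ≤ ‖u‖₂`. By Cauchy–Schwarz, `|K_λ a (x) - K_λ a (x')|² ≤ ‖u‖₂² |m x - m x'|` where
`m x = ∫_{-∞}^x |u|²` is bounded. Hence finitely many points `xᵢ` whose `m`-values form a
`δ`-net of the range of `m` control `K_λ a` uniformly in `a`: up to `ε`, `K_λ a` is determined in
`L^∞` by the bounded vector `(K_λ a (xᵢ))ᵢ ∈ ℂⁿ`, so the image of the unit ball is totally bounded.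
-/

open ComplexConjugate Metric

lemma exists_finite_image_subset_iUnion_ball {Z X Y : Type*} [PseudoMetricSpace X]
    [PseudoMetricSpace Y] {s : Set Z} {f : Z → X} {Φ : Z → Y} (hΦ : TotallyBounded (Φ '' s))
    {δ ε : ℝ} (hδ : 0 < δ) (h : ∀ a ∈ s, ∀ b ∈ s, dist (Φ a) (Φ b) < δ → dist (f a) (f b) < ε) :
    ∃ t : Set X, t.Finite ∧ f '' s ⊆ ⋃ y ∈ t, ball y ε := by
  obtain ⟨t, hts, ht, hcover⟩ :=
    exists_subset_image_finite_and.1 (finite_approx_of_totallyBounded hΦ δ hδ)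
  refine ⟨f '' t, ht.image f, ?_⟩
  rintro _ ⟨a, ha, rfl⟩
  obtain ⟨b, hb, hab⟩ : ∃ b ∈ t, dist (Φ a) (Φ b) < δ := by
    simpa using hcover (mem_image_of_mem Φ ha)
  exact mem_biUnion (mem_image_of_mem f hb) (h a ha b (hts hb) hab)

namespace MeasureTheory.Lp

variable {α E : Type*} [MeasurableSpace α] {μ : Measure α} [NormedAddCommGroup E]

lemma ae_norm_le_of_norm_le {f : Lp E ∞ μ} {C : ℝ} (hf : ‖f‖ ≤ C) : ∀ᵐ x ∂μ, ‖f x‖ ≤ C := by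
  rw [Lp.norm_def, toReal_eLpNorm (Lp.aestronglyMeasurable f)] at hf
  filter_upwards [ae_le_lpNorm_exponent_top (Lp.memLp f)] with x hx using hx.trans hf

lemma dist_le_of_ae_eq {f g : Lp E ∞ μ} {F G : α → E} (hf : f =ᵐ[μ] F) (hg : g =ᵐ[μ] G)
    {C : ℝ} (hC : 0 ≤ C) (h : ∀ x, ‖F x - G x‖ ≤ C) : dist f g ≤ C := by
  have hbound : ∀ᵐ x ∂μ, ‖(⇑f - ⇑g) x‖ ≤ C := by
    filter_upwards [hf, hg] with x hfx hgx
    rw [Pi.sub_apply, hfx, hgx]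
    exact h x
  rw [Lp.dist_def, eLpNorm_exponent_top]
  exact ENNReal.toReal_le_of_le_ofReal hC (eLpNormEssSup_le_of_ae_bound hbound)

end MeasureTheory.Lp

section L2

variable {α E : Type*} [MeasurableSpace α] {μ : Measure α} [NormedAddCommGroup E]

lemma norm_integral_mul_le_sqrt_mul_sqrt {𝕜 : Type*} [RCLike 𝕜] {f g : α → 𝕜}
    (hf : MemLp f 2 μ) (hg : MemLp g 2 μ) :
    ‖∫ a, f a * g a ∂μ‖ ≤ √(∫ a, ‖f a‖ ^ 2 ∂μ) * √(∫ a, ‖g a‖ ^ 2 ∂μ) := by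
  have h := integral_mul_norm_le_Lp_mul_Lq (f := f) (g := g) Real.HolderConjugate.two_two
    (by simpa using hf) (by simpa using hg)
  simp only [Real.rpow_two, ← Real.sqrt_eq_rpow] at h
  calc ‖∫ a, f a * g a ∂μ‖ ≤ ∫ a, ‖f a‖ * ‖g a‖ ∂μ := by
        simpa only [norm_mul] using norm_integral_le_integral_norm (fun a => f a * g a)
    _ ≤ _ := h

lemma setIntegral_norm_sq_le {g : α → E} (hg : MemLp g 2 μ) (s : Set α) :
    ∫ a in s, ‖g a‖ ^ 2 ∂μ ≤ ∫ a, ‖g a‖ ^ 2 ∂μ :=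
  setIntegral_le_integral (hg.integrable_norm_pow two_ne_zero)
    (Eventually.of_forall fun _ => by positivity)

lemma integral_norm_sq_le_of_ae_norm_le {F : Type*} [NormedAddCommGroup F] {f : α → E}
    {g : α → F} (hg : MemLp g 2 μ) (h : ∀ᵐ a ∂μ, ‖f a‖ ≤ ‖g a‖) :
    ∫ a, ‖f a‖ ^ 2 ∂μ ≤ ∫ a, ‖g a‖ ^ 2 ∂μ :=
  integral_mono_of_nonneg (Eventually.of_forall fun _ => by positivity)
    (hg.integrable_norm_pow two_ne_zero) (h.mono fun _ ha => pow_le_pow_left₀ (norm_nonneg _) ha 2)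

end L2

section Primitive

variable {μ : Measure ℝ} {u : ℝ → ℂ}

lemma setIntegral_Iic_sub_Iic {E : Type*} [NormedAddCommGroup E] [NormedSpace ℝ E] {f : ℝ → E}
    (hf : Integrable f μ) {a b : ℝ} (hab : a ≤ b) :
    (∫ x in Iic b, f x ∂μ) - ∫ x in Iic a, f x ∂μ = ∫ x in Ioc a b, f x ∂μ := by
  rw [intervalIntegral.integral_Iic_sub_Iic hf.integrableOn hf.integrableOn,
    intervalIntegral.integral_of_le hab]

lemma norm_setIntegral_Iic_mul_sub_le (hu : MemLp u 2 μ) {g : ℝ → ℂ} (hg : MemLp g 2 μ)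
    (a b : ℝ) :
    ‖(∫ y in Iic b, u y * g y ∂μ) - ∫ y in Iic a, u y * g y ∂μ‖ ≤
      √|(∫ y in Iic b, ‖u y‖ ^ 2 ∂μ) - ∫ y in Iic a, ‖u y‖ ^ 2 ∂μ| * √(∫ y, ‖g y‖ ^ 2 ∂μ) := by
  wlog hab : a ≤ b generalizing a b
  · rw [norm_sub_rev, abs_sub_comm]
    exact this b a (le_of_not_ge hab)
  rw [setIntegral_Iic_sub_Iic (f := fun y => u y * g y) (hu.integrable_mul hg) hab,
    setIntegral_Iic_sub_Iic (f := fun y => ‖u y‖ ^ 2) (hu.integrable_norm_pow two_ne_zero) hab,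
    abs_of_nonneg (integral_nonneg fun _ => by positivity)]
  refine (norm_integral_mul_le_sqrt_mul_sqrt (hu.restrict _) (hg.restrict _)).trans ?_
  gcongr √_ * √?_
  exact setIntegral_norm_sq_le hg _

lemma norm_setIntegral_Iic_mul_le (hu : MemLp u 2 μ) {g : ℝ → ℂ} (hg : MemLp g 2 μ) (x : ℝ) :
    ‖∫ y in Iic x, u y * g y ∂μ‖ ≤ √(∫ y, ‖u y‖ ^ 2 ∂μ) * √(∫ y, ‖g y‖ ^ 2 ∂μ) := by
  refine (norm_integral_mul_le_sqrt_mul_sqrt (hu.restrict _) (hg.restrict _)).trans ?_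
  gcongr √?_ * √?_
  · exact setIntegral_norm_sq_le hu _
  · exact setIntegral_norm_sq_le hg _

lemma exists_finset_forall_exists_norm_setIntegral_Iic_sub_le (hu : MemLp u 2 μ) {C : ℝ}
    (hC : 0 ≤ C) {ε : ℝ} (hε : 0 < ε) :
    ∃ t : Finset ℝ, ∀ x, ∃ y ∈ t, ∀ g : ℝ → ℂ, MemLp g 2 μ → ∫ z, ‖g z‖ ^ 2 ∂μ ≤ C →
      ‖(∫ z in Iic x, u z * g z ∂μ) - ∫ z in Iic y, u z * g z ∂μ‖ ≤ ε := by
  set m : ℝ → ℝ := fun x => ∫ z in Iic x, ‖u z‖ ^ 2 ∂μ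
  have hm : m '' univ ⊆ Icc 0 (∫ z, ‖u z‖ ^ 2 ∂μ) := by
    rintro _ ⟨x, -, rfl⟩
    exact ⟨integral_nonneg fun _ => by positivity, setIntegral_norm_sq_le hu _⟩
  set δ := ε ^ 2 / (C + 1)
  obtain ⟨t, -, ht, hcover⟩ := exists_subset_image_finite_and.1 <|
    finite_approx_of_totallyBounded ((totallyBounded_Icc _ _).subset hm) δ (by positivity)
  refine ⟨ht.toFinset, fun x => ?_⟩
  obtain ⟨y, hy, hxy⟩ : ∃ y ∈ t, dist (m x) (m y) < δ := by
    simpa using hcover (mem_image_of_mem m (mem_univ x))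
  refine ⟨y, ht.mem_toFinset.2 hy, fun g hg hgC => ?_⟩
  calc _ ≤ √|m x - m y| * √(∫ z, ‖g z‖ ^ 2 ∂μ) := norm_setIntegral_Iic_mul_sub_le hu hg y x
    _ ≤ √(δ * C) := by
        rw [Real.sqrt_mul' _ hC]
        gcongr
        exact hxy.le
    _ ≤ √(ε ^ 2) := by
        gcongr
        rw [div_mul_eq_mul_div, div_le_iff₀ (by positivity)]
        nlinarith [sq_nonneg ε]
    _ = ε := Real.sqrt_sq hε.le

lemma exists_finset_forall_norm_setIntegral_Iic_sub_le_of_forall_mem (hu : MemLp u 2 μ) {C : ℝ}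
    (hC : 0 ≤ C) {ε : ℝ} (hε : 0 < ε) :
    ∃ t : Finset ℝ, ∀ g g' : ℝ → ℂ, MemLp g 2 μ → MemLp g' 2 μ →
      ∫ z, ‖g z‖ ^ 2 ∂μ ≤ C → ∫ z, ‖g' z‖ ^ 2 ∂μ ≤ C →
      (∀ y ∈ t, ‖(∫ z in Iic y, u z * g z ∂μ) - ∫ z in Iic y, u z * g' z ∂μ‖ ≤ ε) →
      ∀ x, ‖(∫ z in Iic x, u z * g z ∂μ) - ∫ z in Iic x, u z * g' z ∂μ‖ ≤ 3 * ε := by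
  obtain ⟨t, ht⟩ := exists_finset_forall_exists_norm_setIntegral_Iic_sub_le hu hC hε
  refine ⟨t, fun g g' hg hg' hgC hg'C hgrid x => ?_⟩
  obtain ⟨y, hy, hxy⟩ := ht x
  have h₁ := hxy g hg hgC
  have h₂ := hgrid y hy
  have h₃ := hxy g' hg' hg'C
  rw [← dist_eq_norm] at h₁ h₂ h₃ ⊢
  rw [dist_comm] at h₃
  calc _ ≤ _ + _ + _ :=
        dist_triangle4 _ (∫ z in Iic y, u z * g z ∂μ) (∫ z in Iic y, u z * g' z ∂μ) _
    _ ≤ ε + ε + ε := by gcongr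
    _ = 3 * ε := by ring

end Primitive

lemma IsSzego.memLp {Pi : (ℝ → ℂ) → ℝ → ℂ} (hPi : IsSzego Pi) {g : ℝ → ℂ}
    (hg : MemLp g 2) : MemLp (Pi g) 2 :=
  (hPi g hg).1.1

lemma IsSzego.integral_norm_sq_le {Pi : (ℝ → ℂ) → ℝ → ℂ} (hPi : IsSzego Pi) {g : ℝ → ℂ}
    (hg : MemLp g 2) : ∫ x, ‖Pi g x‖ ^ 2 ≤ ∫ x, ‖g x‖ ^ 2 := by
  have hp := hPi.memLp hg
  have hpc : MemLp (fun x => conj (Pi g x)) 2 := hp.star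
  -- orthogonality of `g - Π g` to `Π g` gives `‖Π g‖₂² = ⟨g, Π g⟩`
  have hself : ∫ x, ‖Pi g x‖ ^ 2 = ∫ x, g x * conj (Pi g x) := by
    have horth := (hPi g hg).2 (Pi g) (hPi g hg).1
    simp only [sub_mul] at horth
    have h1 : Integrable (fun x => g x * conj (Pi g x)) := hg.integrable_mul hpc
    have h2 : Integrable (fun x => Pi g x * conj (Pi g x)) := hp.integrable_mul hpc
    rw [integral_sub h1 h2, sub_eq_zero] at horth
    rw [horth, ← integral_complex_ofReal]
    congr 1
    ext x
    rw [Complex.mul_conj, Complex.normSq_eq_norm_sq]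
  have hI0 : 0 ≤ ∫ x, ‖Pi g x‖ ^ 2 := integral_nonneg fun _ => by positivity
  have hG0 : 0 ≤ ∫ x, ‖g x‖ ^ 2 := integral_nonneg fun _ => by positivity
  have key : ∫ x, ‖Pi g x‖ ^ 2 ≤ √(∫ x, ‖g x‖ ^ 2) * √(∫ x, ‖Pi g x‖ ^ 2) := by
    have hcs := norm_integral_mul_le_sqrt_mul_sqrt hg hpc
    simpa only [← hself, Complex.norm_real, Real.norm_of_nonneg hI0, Complex.norm_conj] using hcs
  nlinarith [Real.sq_sqrt hI0, Real.sq_sqrt hG0, Real.sqrt_nonneg (∫ x, ‖Pi g x‖ ^ 2),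
    Real.sqrt_nonneg (∫ x, ‖g x‖ ^ 2)]

noncomputable def szegoTwist (Pi : (ℝ → ℂ) → ℝ → ℂ) (u : ℝ → ℂ) (lam : ℝ) (a : ℝ → ℂ) (y : ℝ) :
    ℂ :=
  Complex.exp (-(Complex.I) * lam * y) *
    Pi (fun z => conj (u z) * Complex.exp (Complex.I * lam * z) * a z) y

lemma Kop_eq_neg_I_mul_setIntegral (Pi : (ℝ → ℂ) → ℝ → ℂ) (u : ℝ → ℂ) (lam : ℝ) (a : ℝ → ℂ)
    (x : ℝ) : Kop Pi u lam a x = -Complex.I * ∫ y in Iic x, u y * szegoTwist Pi u lam a y := by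
  rw [Kop]
  congr 2
  ext y
  simp only [szegoTwist]
  ring

lemma IsSzego.memLp_szegoTwist_and_integral_le {Pi : (ℝ → ℂ) → ℝ → ℂ} (hPi : IsSzego Pi)
    {u : ℝ → ℂ} (hu : MemLp u 2) (lam : ℝ) {a : ℝ → ℂ} (ha : AEStronglyMeasurable a)
    (ha1 : ∀ᵐ z, ‖a z‖ ≤ 1) :
    MemLp (szegoTwist Pi u lam a) 2 ∧ ∫ y, ‖szegoTwist Pi u lam a y‖ ^ 2 ≤ ∫ y, ‖u y‖ ^ 2 := by
  set h : ℝ → ℂ := fun z => conj (u z) * Complex.exp (Complex.I * lam * z) * a z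
  have hle : ∀ᵐ z, ‖h z‖ ≤ ‖u z‖ := by
    filter_upwards [ha1] with z hz
    simpa [h, Complex.norm_exp] using mul_le_of_le_one_right (norm_nonneg (u z)) hz
  have hexp (c : ℂ) : Continuous fun z : ℝ => Complex.exp (c * lam * z) := by fun_prop
  have hh : MemLp h 2 :=
    hu.of_le (((Complex.continuous_conj.comp_aestronglyMeasurable hu.1).mul
      (hexp Complex.I).aestronglyMeasurable).mul ha) hle
  have hnorm : ∀ y, ‖szegoTwist Pi u lam a y‖ = ‖Pi h y‖ := fun y => by
    simp [szegoTwist, h, Complex.norm_exp]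
  refine ⟨(hPi.memLp hh).of_le ((hexp (-Complex.I)).aestronglyMeasurable.mul (hPi.memLp hh).1)
    (Eventually.of_forall fun y => (hnorm y).le), ?_⟩
  simp only [hnorm]
  exact (hPi.integral_norm_sq_le hh).trans (integral_norm_sq_le_of_ae_norm_le hu hle)

theorem Kop_compact_general
    (Pi : (ℝ → ℂ) → ℝ → ℂ) (hPi : IsSzego Pi)
    (u : ℝ → ℂ) (hu : HardyLp 2 u)
    (lam : ℝ)
    (T : Lp ℂ ⊤ (volume : Measure ℝ) →ₗ[ℂ] Lp ℂ ⊤ (volume : Measure ℝ))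
    (hT : ∀ a : Lp ℂ ⊤ (volume : Measure ℝ),
      (T a : ℝ → ℂ) =ᵐ[(volume : Measure ℝ)] Kop Pi u lam (a : ℝ → ℂ)) :
    IsCompactOperator T := by
  set B : Set (Lp ℂ ∞ (volume : Measure ℝ)) := closedBall 0 1
  set M := ∫ y, ‖u y‖ ^ 2
  have hM : 0 ≤ M := integral_nonneg fun _ => by positivity
  have htwist (a) (ha : a ∈ B) :
      MemLp (szegoTwist Pi u lam a) 2 ∧ ∫ y, ‖szegoTwist Pi u lam a y‖ ^ 2 ≤ M :=
    hPi.memLp_szegoTwist_and_integral_le hu.1 lam (Lp.aestronglyMeasurable a)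
      (Lp.ae_norm_le_of_norm_le (mem_closedBall_zero_iff.1 ha))
  suffices htb : TotallyBounded (T '' B) from
    (isCompactOperator_iff_isCompact_closure_image_closedBall T one_pos).2
      (htb.closure.isCompact_of_isClosed isClosed_closure)
  refine totallyBounded_iff.2 fun ε hε => ?_
  obtain ⟨t, ht⟩ :=
    exists_finset_forall_norm_setIntegral_Iic_sub_le_of_forall_mem hu.1 hM (ε := ε / 4)
      (by positivity)
  let Φ (a : Lp ℂ ∞ (volume : Measure ℝ)) (y : t) : ℂ :=
    ∫ z in Iic (y : ℝ), u z * szegoTwist Pi u lam a z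
  refine exists_finite_image_subset_iUnion_ball (Φ := Φ) ?_ (δ := ε / 4) (by positivity) ?_
  · refine (isCompact_closedBall (0 : t → ℂ) (√M * √M)).totallyBounded.subset ?_
    rintro _ ⟨a, ha, rfl⟩
    rw [mem_closedBall_zero_iff, pi_norm_le_iff_of_nonneg (by positivity)]
    exact fun y => (norm_setIntegral_Iic_mul_le hu.1 (htwist a ha).1 y).trans (by
      gcongr; exact (htwist a ha).2)
  · intro a ha b hb hab
    have hgrid (y) (hy : y ∈ t) : ‖Φ a ⟨y, hy⟩ - Φ b ⟨y, hy⟩‖ ≤ ε / 4 := by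
      rw [← dist_eq_norm]
      exact (dist_le_pi_dist (Φ a) (Φ b) ⟨y, hy⟩).trans hab.le
    refine (Lp.dist_le_of_ae_eq (hT a) (hT b) (C := 3 * (ε / 4)) (by positivity)
      fun x => ?_).trans_lt (by linarith)
    rw [Kop_eq_neg_I_mul_setIntegral, Kop_eq_neg_I_mul_setIntegral, ← mul_sub, norm_mul,
      norm_neg, Complex.norm_I, one_mul]
    exact ht _ _ (htwist a ha).1 (htwist b hb).1 (htwist a ha).2 (htwist b hb).2 hgrid x

/-- **Compactness of `K_λ` on `L^∞(ℝ)`.** Let `u ∈ L²₊(ℝ)` and `λ > 0`. Any linear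
realisation `T` of the operator `K_λ` on the Banach space `L^∞(ℝ)` is a compact
operator. -/
theorem Kop_compact
    (Pi : (ℝ → ℂ) → ℝ → ℂ) (hPi : IsSzego Pi)
    (u : ℝ → ℂ) (hu : HardyLp 2 u)
    (lam : ℝ) (hlam : 0 < lam)
    (T : Lp ℂ ⊤ (volume : Measure ℝ) →ₗ[ℂ] Lp ℂ ⊤ (volume : Measure ℝ))
    (hT : ∀ a : Lp ℂ ⊤ (volume : Measure ℝ),
      (T a : ℝ → ℂ) =ᵐ[(volume : Measure ℝ)] Kop Pi u lam (a : ℝ → ℂ)) :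
    IsCompactOperator T :=
  Kop_compact_general Pi hPi u hu lam T hT
end
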